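/- arXiv:2407.11825 — 3 statements merged into one kernel-verified Lean document; each statement's English description precedes it below -/
import Mathlib

section
/- Let c ∈ ℝ^m with c ≥ 0, and for each ℓ ∈ ℕ let g_ℓ : [0,∞)^m → ℝ be non-decreasing (in the componentwise order) in y, converging pointwise as ℓ → ∞ to a continuous, strictly increasing function g. Define v* = sup{c^T y : g(y) ≤ 1, y ≥ 0} and v_ℓ = sup{c^T y : g_ℓ(y) ≤ 1, y ≥ 0}. Then v_ℓ → v* as ℓ → ∞ (where v* may be +∞, in which case v_ℓ → +∞). -/
/-!
Shrinking a nonzero feasible point `y` of the limit problem to `s • y` (`s < 1`) makes the limit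
constraint strict, so `s • y` is eventually feasible for the approximating problems: this gives
`v* ≤ liminf v_ℓ`. Conversely, near-optimal points of infinitely many approximating problems can
be truncated to a fixed box without losing objective value; a cluster point `a` of them still has
`c ⬝ᵥ a` large, every `s • a` with `s < 1` lies below infinitely many of them, hence is feasible
for infinitely many `g_ℓ` and therefore for the limit: this gives `limsup v_ℓ ≤ v*`.
-/

open Filter Topology

variable {ι κ : Type*} [Fintype ι]

noncomputable def optValue (c : ι → ℝ) (h : (ι → ℝ) → ℝ) : ENNReal :=
  ⨆ y ∈ {y : ι → ℝ | 0 ≤ y ∧ h y ≤ 1}, ENNReal.ofReal (c ⬝ᵥ y)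

lemma ofReal_dotProduct_le_optValue {c y : ι → ℝ} {h : (ι → ℝ) → ℝ} (hy : 0 ≤ y) (hhy : h y ≤ 1) :
    ENNReal.ofReal (c ⬝ᵥ y) ≤ optValue c h :=
  le_biSup (fun y => ENNReal.ofReal (c ⬝ᵥ y)) ⟨hy, hhy⟩

lemma optValue_le_liminf (l : Filter κ) (c : ι → ℝ) (g : κ → (ι → ℝ) → ℝ)
    (glim : (ι → ℝ) → ℝ) (hconv : ∀ y, 0 ≤ y → Tendsto (fun ℓ => g ℓ y) l (𝓝 (glim y)))
    (hstrict : StrictMonoOn glim (Set.Ici 0)) :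
    optValue c glim ≤ liminf (fun ℓ => optValue c (g ℓ)) l := by
  refine iSup₂_le fun y ⟨hy0, hy1⟩ => ENNReal.le_of_forall_lt_one_mul_le fun t ht => ?_
  obtain rfl | hy := eq_or_ne y 0
  · simp
  set s := t.toReal
  have hs0 : 0 ≤ s := ENNReal.toReal_nonneg
  have hs1 : s < 1 := ENNReal.toReal_lt_of_lt_ofReal (by simpa using ht)
  have hsy0 : 0 ≤ s • y := smul_nonneg hs0 hy0
  have hsy : s • y < y := by
    refine lt_of_le_of_ne (fun i => mul_le_of_le_one_left (hy0 i) hs1.le) fun h => hs1.ne ?_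
    exact smul_left_injective ℝ hy (h.trans (one_smul ℝ y).symm)
  have hlt : glim (s • y) < 1 := (hstrict hsy0 hy0 hsy).trans_le hy1
  have hfeas : ∀ᶠ ℓ in l, g ℓ (s • y) ≤ 1 :=
    ((hconv _ hsy0).eventually (eventually_lt_nhds hlt)).mono fun _ h => h.le
  calc t * ENNReal.ofReal (c ⬝ᵥ y) = ENNReal.ofReal (c ⬝ᵥ s • y) := by
        rw [dotProduct_smul, smul_eq_mul, ENNReal.ofReal_mul hs0,
          ENNReal.ofReal_toReal ht.ne_top]
    _ ≤ liminf (fun ℓ => optValue c (g ℓ)) l :=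
        le_liminf_of_le (by isBoundedDefault)
          (hfeas.mono fun _ h => ofReal_dotProduct_le_optValue hsy0 h)

-- Either no coordinate with positive weight is capped, or a capped one alone contributes
-- `c i * M ≥ A`.
lemma le_dotProduct_inf_const {c y : ι → ℝ} {A M : ℝ} (hc : 0 ≤ c) (hy : 0 ≤ y) (hM : 0 ≤ M)
    (hAM : ∀ i, 0 < c i → A ≤ c i * M) (hA : A ≤ c ⬝ᵥ y) : A ≤ c ⬝ᵥ (y ⊓ fun _ => M) := by
  by_cases h : ∃ i, 0 < c i ∧ M ≤ y i
  · obtain ⟨i, hci, hMy⟩ := h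
    calc A ≤ c i * (y ⊓ fun _ => M) i := by simpa [hMy] using hAM i hci
      _ ≤ c ⬝ᵥ (y ⊓ fun _ => M) :=
          Finset.single_le_sum (f := fun j => c j * (y ⊓ fun _ => M) j)
            (fun j _ => mul_nonneg (hc j) (le_min (hy j) hM)) (Finset.mem_univ i)
  · push Not at h
    convert hA using 1
    refine Finset.sum_congr rfl fun i _ => ?_
    rcases (hc i).eq_or_lt with hci | hci
    · simp [← hci]
    · simp [min_eq_left (h i hci).le]

lemma eventually_smul_le_nhds {a : ι → ℝ} (ha : 0 ≤ a) {t : ℝ} (ht : t < 1) :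
    ∀ᶠ x in 𝓝 a, 0 ≤ x → t • a ≤ x := by
  have : ∀ i, ∀ᶠ x : ι → ℝ in 𝓝 a, 0 ≤ x i → t * a i ≤ x i := fun i => by
    rcases (ha i).eq_or_lt with hai | hai
    · exact Eventually.of_forall fun x hx => by rwa [← hai, Pi.zero_apply, mul_zero]
    · exact (((continuous_apply i).tendsto a).eventually
        (eventually_gt_nhds (mul_lt_of_lt_one_left hai ht))).mono fun _ hx _ => hx.le
  exact (eventually_all.2 this).mono fun x hx hx0 i => hx i (hx0 i)

lemma exists_le_dotProduct_and_frequently_feasible_smul (l : Filter κ) {c : ι → ℝ} (hc : 0 ≤ c)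
    (g : κ → (ι → ℝ) → ℝ) (hmono : ∀ ℓ, MonotoneOn (g ℓ) (Set.Ici 0)) {A : ℝ}
    (hfreq : ∃ᶠ ℓ in l, ∃ y, 0 ≤ y ∧ g ℓ y ≤ 1 ∧ A ≤ c ⬝ᵥ y) :
    ∃ a, 0 ≤ a ∧ A ≤ c ⬝ᵥ a ∧ ∀ s ∈ Set.Ico (0 : ℝ) 1, ∃ᶠ ℓ in l, g ℓ (s • a) ≤ 1 := by
  obtain ⟨M₀, hM₀⟩ := Finite.exists_le fun i => A / c i
  set M := max M₀ 0
  have hAM : ∀ i, 0 < c i → A ≤ c i * M := fun i hci =>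
    (div_le_iff₀' hci).1 ((hM₀ i).trans (le_max_left _ _))
  set P : κ → (ι → ℝ) → Prop := fun ℓ y => 0 ≤ y ∧ g ℓ y ≤ 1 ∧ A ≤ c ⬝ᵥ y
  set Y : κ → ι → ℝ := fun ℓ => Classical.epsilon (P ℓ) ⊓ fun _ => M
  set l' := l ⊓ 𝓟 {ℓ | ∃ y, P ℓ y}
  have : l'.NeBot := frequently_iff_neBot.1 hfreq
  set K : Set (ι → ℝ) := Set.Icc 0 (fun _ => M) ∩ {x | A ≤ c ⬝ᵥ x}
  have hK : IsCompact K :=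
    isCompact_Icc.inter_right
      (isClosed_le continuous_const (continuous_const.dotProduct continuous_id))
  have hY : ∀ᶠ ℓ in l', Y ℓ ∈ K ∧ g ℓ (Y ℓ) ≤ 1 := by
    refine eventually_inf_principal.2 (Eventually.of_forall fun ℓ hℓ => ?_)
    obtain ⟨hy0, hy1, hyA⟩ := Classical.epsilon_spec hℓ
    have hY0 : 0 ≤ Y ℓ := le_inf hy0 fun _ => le_max_right _ _
    exact ⟨⟨⟨hY0, inf_le_right⟩, le_dotProduct_inf_const hc hy0 (le_max_right _ _) hAM hyA⟩,
      (hmono ℓ hY0 hy0 inf_le_left).trans hy1⟩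
  obtain ⟨a, ⟨⟨ha0, -⟩, hAa⟩, hclus⟩ :=
    hK.exists_clusterPt (f := map Y l') (le_principal_iff.2 (hY.mono fun _ h => h.1))
  refine ⟨a, ha0, hAa, fun s ⟨hs0, hs1⟩ => ?_⟩
  have hbelow : ∃ᶠ ℓ in l', 0 ≤ Y ℓ → s • a ≤ Y ℓ :=
    frequently_map.1 (hclus.frequently (eventually_smul_le_nhds ha0 hs1))
  refine ((hbelow.and_eventually hY).mono fun ℓ ⟨hle, hYK, hYg⟩ => ?_).filter_mono inf_le_left
  exact (hmono ℓ (smul_nonneg hs0 ha0) hYK.1.1 (hle hYK.1.1)).trans hYg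

lemma ofReal_le_optValue_of_frequently (l : Filter κ) {c : ι → ℝ} (hc : 0 ≤ c)
    (g : κ → (ι → ℝ) → ℝ) (glim : (ι → ℝ) → ℝ) (hmono : ∀ ℓ, MonotoneOn (g ℓ) (Set.Ici 0))
    (hconv : ∀ y, 0 ≤ y → Tendsto (fun ℓ => g ℓ y) l (𝓝 (glim y))) {A : ℝ}
    (hfreq : ∃ᶠ ℓ in l, ∃ y, 0 ≤ y ∧ g ℓ y ≤ 1 ∧ A ≤ c ⬝ᵥ y) :
    ENNReal.ofReal A ≤ optValue c glim := by
  obtain ⟨a, ha0, hAa, hfeas⟩ :=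
    exists_le_dotProduct_and_frequently_feasible_smul l hc g hmono hfreq
  refine ENNReal.le_of_forall_lt_one_mul_le fun t ht => ?_
  set s := t.toReal
  have hs0 : 0 ≤ s := ENNReal.toReal_nonneg
  have hsa0 : 0 ≤ s • a := smul_nonneg hs0 ha0
  have hlim : glim (s • a) ≤ 1 := isClosed_Iic.mem_of_frequently_of_tendsto
    (hfeas s ⟨hs0, ENNReal.toReal_lt_of_lt_ofReal (by simpa using ht)⟩) (hconv _ hsa0)
  calc t * ENNReal.ofReal A = ENNReal.ofReal (s * A) := by
        rw [ENNReal.ofReal_mul hs0, ENNReal.ofReal_toReal ht.ne_top]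
    _ ≤ ENNReal.ofReal (c ⬝ᵥ s • a) := by
        rw [dotProduct_smul, smul_eq_mul]; gcongr
    _ ≤ optValue c glim := ofReal_dotProduct_le_optValue hsa0 hlim

lemma limsup_optValue_le (l : Filter κ) {c : ι → ℝ} (hc : 0 ≤ c)
    (g : κ → (ι → ℝ) → ℝ) (glim : (ι → ℝ) → ℝ) (hmono : ∀ ℓ, MonotoneOn (g ℓ) (Set.Ici 0))
    (hconv : ∀ y, 0 ≤ y → Tendsto (fun ℓ => g ℓ y) l (𝓝 (glim y))) :
    limsup (fun ℓ => optValue c (g ℓ)) l ≤ optValue c glim := by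
  refine le_of_forall_lt_imp_le_of_dense fun α hα => ?_
  have hαtop : α ≠ ⊤ := ne_top_of_lt hα
  rw [← ENNReal.ofReal_toReal hαtop]
  refine ofReal_le_optValue_of_frequently l hc g glim hmono hconv
    ((frequently_lt_of_lt_limsup (by isBoundedDefault) hα).mono fun ℓ hℓ => ?_)
  obtain ⟨y, ⟨hy0, hy1⟩, hαy⟩ := lt_biSup_iff.1 hℓ
  exact ⟨y, hy0, hy1, ((ENNReal.lt_ofReal_iff_toReal_lt hαtop).1 hαy).le⟩

theorem stmt_0_general (m : ℕ) (c : Fin m → ℝ) (hc : 0 ≤ c)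
    (g : ℕ → (Fin m → ℝ) → ℝ) (glim : (Fin m → ℝ) → ℝ)
    (hmono : ∀ ℓ : ℕ, ∀ y y' : Fin m → ℝ, 0 ≤ y → y ≤ y' → g ℓ y ≤ g ℓ y')
    (hconv : ∀ y : Fin m → ℝ, 0 ≤ y →
      Tendsto (fun ℓ => g ℓ y) atTop (𝓝 (glim y)))
    (hstrict : ∀ y y' : Fin m → ℝ, 0 ≤ y → y ≤ y' → y ≠ y' → glim y < glim y') :
    Tendsto
      (fun ℓ => ⨆ y ∈ {y : Fin m → ℝ | 0 ≤ y ∧ g ℓ y ≤ 1},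
        ENNReal.ofReal (∑ i, c i * y i))
      atTop
      (𝓝 (⨆ y ∈ {y : Fin m → ℝ | 0 ≤ y ∧ glim y ≤ 1},
        ENNReal.ofReal (∑ i, c i * y i))) :=
  tendsto_of_le_liminf_of_limsup_le
    (optValue_le_liminf atTop c g glim hconv fun y hy y' _ hlt => hstrict y y' hy hlt.le hlt.ne)
    (limsup_optValue_le atTop hc g glim (fun ℓ y hy y' _ hle => hmono ℓ y y' hy hle) hconv)

/-- convergence of optimal values under pointwise convergence of
monotone constraint functions. -/
theorem stmt_0 (m : ℕ) (c : Fin m → ℝ) (hc : 0 ≤ c)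
    (g : ℕ → (Fin m → ℝ) → ℝ) (glim : (Fin m → ℝ) → ℝ)
    (hmono : ∀ ℓ : ℕ, ∀ y y' : Fin m → ℝ, 0 ≤ y → y ≤ y' → g ℓ y ≤ g ℓ y')
    (hconv : ∀ y : Fin m → ℝ, 0 ≤ y →
      Tendsto (fun ℓ => g ℓ y) atTop (𝓝 (glim y)))
    (hcont : ContinuousOn glim {y | 0 ≤ y})
    (hstrict : ∀ y y' : Fin m → ℝ, 0 ≤ y → y ≤ y' → y ≠ y' → glim y < glim y') :
    Tendsto
      (fun ℓ => ⨆ y ∈ {y : Fin m → ℝ | 0 ≤ y ∧ g ℓ y ≤ 1},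
        ENNReal.ofReal (∑ i, c i * y i))
      atTop
      (𝓝 (⨆ y ∈ {y : Fin m → ℝ | 0 ≤ y ∧ glim y ≤ 1},
        ENNReal.ofReal (∑ i, c i * y i))) :=
  stmt_0_general m c hc g glim hmono hconv hstrict
end

section
/- Let λ : [0,∞)^n → [0,∞) be continuous, non-decreasing, and satisfy λ(rx) = r^β λ(x) for all r > 0, x ≥ 0, where β > 0, and suppose λ(x) > 0 whenever x ≠ 0. For b ∈ [0,∞)^n define I(b) = inf{λ(x) : x ≥ 0, b^T x ≥ 1} (with inf over the empty set equal to +∞). Then the set {b ∈ [0,∞)^n : I(b) ≥ 1} is convex. -/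
/-- convexity of `{b : I(b) ≥ 1}` where
`I(b) = inf {λ(x) : x ≥ 0, bᵀx ≥ 1}` (infimum in `[0,∞]`, empty inf = ∞). -/
theorem stmt_1 (n : ℕ) (β : ℝ) (hβ : 0 < β) (lam : (Fin n → ℝ) → ℝ)
    (hnonneg : ∀ x : Fin n → ℝ, 0 ≤ x → 0 ≤ lam x)
    (hcont : ContinuousOn lam {x | 0 ≤ x})
    (hmono : ∀ x x' : Fin n → ℝ, 0 ≤ x → x ≤ x' → lam x ≤ lam x')
    (hhom : ∀ r : ℝ, 0 < r → ∀ x : Fin n → ℝ, 0 ≤ x →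
      lam (r • x) = r ^ β * lam x)
    (hpos : ∀ x : Fin n → ℝ, 0 ≤ x → x ≠ 0 → 0 < lam x) :
    Convex ℝ {b : Fin n → ℝ | 0 ≤ b ∧
      1 ≤ ⨅ x ∈ {x : Fin n → ℝ | 0 ≤ x ∧ 1 ≤ ∑ i, b i * x i},
        ENNReal.ofReal (lam x)} := by
  rintro b1 ⟨hb1, h1⟩ b2 ⟨hb2, h2⟩ a c ha hc hac
  refine ⟨fun i => ?_, ?_⟩
  · have h1i := hb1 i
    have h2i := hb2 i
    simp only [Pi.add_apply, Pi.smul_apply, smul_eq_mul, Pi.zero_apply] at *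
    positivity
  · refine le_iInf₂ fun x hx => ?_
    obtain ⟨hx0, hx1⟩ := hx
    have hsum : 1 ≤ a * ∑ i, b1 i * x i + c * ∑ i, b2 i * x i := by
      calc 1 ≤ ∑ i, (a • b1 + c • b2) i * x i := hx1
        _ = a * ∑ i, b1 i * x i + c * ∑ i, b2 i * x i := by
          simp [Finset.mul_sum, add_mul, mul_assoc, Finset.sum_add_distrib]
    have hmax : 1 ≤ ∑ i, b1 i * x i ∨ 1 ≤ ∑ i, b2 i * x i := by
      by_contra h
      push_neg at h
      rcases ha.eq_or_lt with rfl | ha'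
      · have hc1 : c = 1 := by linarith
        subst hc1
        simp at hsum
        linarith
      · have t1 := (mul_lt_mul_of_pos_left h.1 ha')
        have t2 := mul_le_mul_of_nonneg_left h.2.le hc
        rw [mul_one] at t1 t2
        linarith
    cases hmax with
    | inl h => exact le_trans h1 (iInf₂_le x ⟨hx0, h⟩)
    | inr h => exact le_trans h2 (iInf₂_le x ⟨hx0, h⟩)
end

section
/- Let λ : [0,∞)^n → [0,∞) be continuous with λ(rx) = r^β λ(x) for r > 0, β > 0, and λ(x) > 0 for x ≠ 0. Define I(b) = inf{λ(x) : x ≥ 0, b^T x ≥ 1}. Then the set {b ∈ [0,∞)^n : I(b) ≥ 1} is compact. -/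
/-- compactness of `{b ∈ [0,∞)^n : I(b) ≥ 1}` where
`I(b) = inf {λ(x) : x ≥ 0, bᵀx ≥ 1}` (infimum in `[0,∞]`, empty inf = ∞). -/
theorem stmt_3 (n : ℕ) (β : ℝ) (hβ : 0 < β) (lam : (Fin n → ℝ) → ℝ)
    (hnonneg : ∀ x : Fin n → ℝ, 0 ≤ x → 0 ≤ lam x)
    (hcont : ContinuousOn lam {x | 0 ≤ x})
    (hhom : ∀ r : ℝ, 0 < r → ∀ x : Fin n → ℝ, 0 ≤ x →
      lam (r • x) = r ^ β * lam x)
    (hpos : ∀ x : Fin n → ℝ, 0 ≤ x → x ≠ 0 → 0 < lam x) :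
    IsCompact {b : Fin n → ℝ | 0 ≤ b ∧
      1 ≤ ⨅ x ∈ {x : Fin n → ℝ | 0 ≤ x ∧ 1 ≤ ∑ i, b i * x i},
        ENNReal.ofReal (lam x)} := by
  -- Characterization of membership
  have hchar : ∀ b : Fin n → ℝ, 0 ≤ b →
      ((∀ x : Fin n → ℝ, 0 ≤ x → 1 ≤ ∑ i, b i * x i → 1 ≤ lam x) ↔
       (∀ x : Fin n → ℝ, 0 ≤ x → max (∑ i, b i * x i) 0 ^ β ≤ lam x)) := by
    intro b hb
    constructor
    · intro h x hx
      rcases le_or_gt (∑ i, b i * x i) 0 with hs | hs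
      · rw [max_eq_right hs, Real.zero_rpow hβ.ne']
        exact hnonneg x hx
      · set s := ∑ i, b i * x i with hsdef
        rw [max_eq_left hs.le]
        have hy : (0 : Fin n → ℝ) ≤ s⁻¹ • x := smul_nonneg (inv_nonneg.2 hs.le) hx
        have hsum : ∑ i, b i * (s⁻¹ • x) i = 1 := by
          have : ∑ i, b i * (s⁻¹ • x) i = s⁻¹ * ∑ i, b i * x i := by
            rw [Finset.mul_sum]
            exact Finset.sum_congr rfl fun i _ => by simp [Pi.smul_apply]; ring
          rw [this, ← hsdef, inv_mul_cancel₀ hs.ne']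
        have h1 : 1 ≤ lam (s⁻¹ • x) := h _ hy (by rw [hsum])
        have h2 : lam x = s ^ β * lam (s⁻¹ • x) := by
          have := hhom s hs (s⁻¹ • x) hy
          rwa [smul_inv_smul₀ hs.ne'] at this
        calc s ^ β = s ^ β * 1 := (mul_one _).symm
          _ ≤ s ^ β * lam (s⁻¹ • x) :=
            mul_le_mul_of_nonneg_left h1 (Real.rpow_nonneg hs.le β)
          _ = lam x := h2.symm
    · intro h x hx hs
      have h1 := h x hx
      rw [max_eq_left (le_trans zero_le_one hs)] at h1
      have h2 : (1 : ℝ) ≤ (∑ i, b i * x i) ^ β := by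
        calc (1 : ℝ) = 1 ^ β := (Real.one_rpow β).symm
          _ ≤ (∑ i, b i * x i) ^ β := Real.rpow_le_rpow zero_le_one hs hβ.le
      exact le_trans h2 h1
  -- rewrite membership in the set
  have hmem : ∀ b : Fin n → ℝ,
      (b ∈ {b : Fin n → ℝ | 0 ≤ b ∧
        1 ≤ ⨅ x ∈ {x : Fin n → ℝ | 0 ≤ x ∧ 1 ≤ ∑ i, b i * x i},
          ENNReal.ofReal (lam x)}) ↔
      (0 ≤ b ∧ ∀ x : Fin n → ℝ, 0 ≤ x → max (∑ i, b i * x i) 0 ^ β ≤ lam x) := by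
    intro b
    simp only [Set.mem_setOf_eq]
    constructor
    · rintro ⟨hb, hI⟩
      refine ⟨hb, (hchar b hb).1 ?_⟩
      intro x hx hs
      have := (le_iInf₂_iff.mp hI) x ⟨hx, hs⟩
      rwa [ENNReal.one_le_ofReal] at this
    · rintro ⟨hb, h⟩
      refine ⟨hb, le_iInf₂_iff.mpr ?_⟩
      rintro x ⟨hx, hs⟩
      rw [ENNReal.one_le_ofReal]
      exact ((hchar b hb).2 h) x hx hs
  have hEq : {b : Fin n → ℝ | 0 ≤ b ∧
        1 ≤ ⨅ x ∈ {x : Fin n → ℝ | 0 ≤ x ∧ 1 ≤ ∑ i, b i * x i},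
          ENNReal.ofReal (lam x)} =
      {b : Fin n → ℝ | 0 ≤ b} ∩
        ⋂ (x : Fin n → ℝ) (_ : 0 ≤ x),
          {b : Fin n → ℝ | max (∑ i, b i * x i) 0 ^ β ≤ lam x} := by
    ext b
    rw [hmem b]
    simp only [Set.mem_inter_iff, Set.mem_setOf_eq, Set.mem_iInter]
  rw [hEq]
  -- closedness
  have hclosed : IsClosed ({b : Fin n → ℝ | 0 ≤ b} ∩
      ⋂ (x : Fin n → ℝ) (_ : 0 ≤ x),
        {b : Fin n → ℝ | max (∑ i, b i * x i) 0 ^ β ≤ lam x}) := by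
    apply IsClosed.inter
    · have : {b : Fin n → ℝ | 0 ≤ b} = Set.Ici 0 := rfl
      rw [this]; exact isClosed_Ici
    · refine isClosed_iInter fun x => isClosed_iInter fun hx => ?_
      apply isClosed_le _ continuous_const
      have hc1 : Continuous fun b : Fin n → ℝ => max (∑ i, b i * x i) 0 := by
        apply Continuous.max _ continuous_const
        exact continuous_finset_sum _ fun i _ => (continuous_apply i).mul continuous_const
      rw [continuous_iff_continuousAt]
      intro b
      exact (hc1.continuousAt).rpow_const (Or.inr hβ.le)
  -- boundedness: contained in a compact box
  set C : Fin n → ℝ := fun i => lam (Pi.single i 1) ^ β⁻¹ with hC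
  have hsub : ({b : Fin n → ℝ | 0 ≤ b} ∩
      ⋂ (x : Fin n → ℝ) (_ : 0 ≤ x),
        {b : Fin n → ℝ | max (∑ i, b i * x i) 0 ^ β ≤ lam x}) ⊆ Set.Icc 0 C := by
    rintro b ⟨hb, hI⟩
    refine ⟨hb, ?_⟩
    intro i
    have hx : (0 : Fin n → ℝ) ≤ Pi.single i 1 := by
      intro j
      by_cases hj : j = i <;> simp [Pi.single_apply, hj]
    have h1 := Set.mem_iInter.mp (Set.mem_iInter.mp hI (Pi.single i 1)) hx
    simp only [Set.mem_setOf_eq] at h1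
    have hsum : ∑ j, b j * (Pi.single i 1 : Fin n → ℝ) j = b i := by
      simp [Pi.single_apply, mul_ite]
    have hbi : (0:ℝ) ≤ b i := hb i
    rw [hsum, max_eq_left hbi] at h1
    calc b i = (b i ^ β) ^ β⁻¹ := (Real.rpow_rpow_inv hbi hβ.ne').symm
      _ ≤ lam (Pi.single i 1) ^ β⁻¹ :=
        Real.rpow_le_rpow (Real.rpow_nonneg hbi β) h1 (inv_nonneg.2 hβ.le)
  exact (isCompact_Icc).of_isClosed_subset hclosed hsub
end
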